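/- If f is a homeomorphism of a compact metric space X such that every point in the connected component of some p ∈ X other than {p} exists (i.e., the component of p has more than one point) and f is the identity map, then p is not shadowable. -/

import Mathlib

open Metric Set

/-- Natural iterates of a homeomorphism. -/
def hnpow {X : Type*} [TopologicalSpace X] (f : X ≃ₜ X) : ℕ → X ≃ₜ X
  | 0 => Homeomorph.refl X
  | n+1 => (hnpow f n).trans f

/-- Integer iterates `fⁿ`, `n ∈ ℤ`, of a homeomorphism. -/
def hpow {X : Type*} [TopologicalSpace X] (f : X ≃ₜ X) : ℤ → X ≃ₜ X
  | Int.ofNat n => hnpow f n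
  | Int.negSucc n => hnpow f.symm (n+1)

variable {X : Type*} [MetricSpace X]

/-- `ξ` is a `δ`-pseudo-orbit of `f`. -/
def IsPseudoOrbit (f : X ≃ₜ X) (δ : ℝ) (ξ : ℤ → X) : Prop :=
  ∀ n : ℤ, dist (f (ξ n)) (ξ (n+1)) ≤ δ

/-- `ξ` is `ε`-shadowed by the orbit of `y`. -/
def ShadowedBy (f : X ≃ₜ X) (ε : ℝ) (y : X) (ξ : ℤ → X) : Prop :=
  ∀ n : ℤ, dist (hpow f n y) (ξ n) ≤ ε

/-- `x` is a shadowable point of `f`. -/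
def ShadowablePoint (f : X ≃ₜ X) (x : X) : Prop :=
  ∀ ε > 0, ∃ δ > 0, ∀ ξ : ℤ → X, IsPseudoOrbit f δ ξ → ξ 0 = x →
    ∃ y, ShadowedBy f ε y ξ

/-- `f` has the pseudo-orbit tracing property. -/
def POTP (f : X ≃ₜ X) : Prop :=
  ∀ ε > 0, ∃ δ > 0, ∀ ξ : ℤ → X, IsPseudoOrbit f δ ξ → ∃ y, ShadowedBy f ε y ξ

/-- `x` is a nonwandering point of `f`. -/
def NonWandering (f : X ≃ₜ X) (x : X) : Prop :=
  ∀ U ∈ nhds x, ∃ k : ℕ, 0 < k ∧ ((hpow f (k : ℤ)) '' U ∩ U).Nonempty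

/-- `x` is a chain recurrent point of `f`. -/
def ChainRecurrent (f : X ≃ₜ X) (x : X) : Prop :=
  ∀ ρ > 0, ∃ n : ℕ, 0 < n ∧ ∃ c : ℕ → X, c 0 = x ∧ c n = x ∧
    ∀ i < n, dist (f (c i)) (c (i+1)) ≤ ρ

/-- `f` is distal: `inf_{n∈ℤ} d(fⁿ x, fⁿ y) > 0` for all distinct `x, y`. -/
def Distal (f : X ≃ₜ X) : Prop :=
  ∀ x y : X, x ≠ y → ∃ c > 0, ∀ n : ℤ, c ≤ dist (hpow f n x) (hpow f n y)

/-- `f` is minimal: every full orbit is dense. -/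
def MinimalHomeo (f : X ≃ₜ X) : Prop :=
  ∀ x : X, Dense (Set.range fun n : ℤ => hpow f n x)

/-- `f` is equicontinuous (uniformly, over all integer iterates). -/
def EquicontinuousHomeo (f : X ≃ₜ X) : Prop :=
  ∀ α > 0, ∃ β > 0, ∀ x y : X, dist x y ≤ β → ∀ n : ℤ, dist (hpow f n x) (hpow f n y) ≤ α

/-! For the identity a δ-pseudo-orbit is just a sequence with δ-close consecutive terms, and the
only orbits are constants. Inside a connected component any two points are joined by a finite
δ-chain, so a pseudo-orbit through `p` can reach a point `q ≠ p` of its component; a constant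
orbit cannot stay `ε`-close to both `p` and `q` once `2ε < d(p, q)`. -/

open Relation

lemma hpow_refl {Y : Type*} [TopologicalSpace Y] (n : ℤ) :
    hpow (Homeomorph.refl Y) n = Homeomorph.refl Y := by
  have hnpow_refl : ∀ m, hnpow (Homeomorph.refl Y) m = Homeomorph.refl Y := by
    intro m
    induction m with
    | zero => rfl
    | succ k ih => rw [hnpow, ih]; rfl
  cases n with
  | ofNat m => exact hnpow_refl m
  | negSucc m => exact hnpow_refl (m + 1)

lemma IsPreconnected.reflTransGen_dist_le {α : Type*} [PseudoMetricSpace α] {s : Set α}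
    (hs : IsPreconnected s) {δ : ℝ} (hδ : 0 < δ) {x y : α} (hx : x ∈ s) (hy : y ∈ s) :
    ReflTransGen (fun a b => dist a b ≤ δ) x y := by
  have : Std.Symm fun a b : α => dist a b ≤ δ := ⟨fun a b h => by rwa [dist_comm]⟩
  refine hs.induction₂ _ (fun a _ => ?_) (fun _ _ _ _ _ _ => ReflTransGen.trans)
    (fun _ _ _ _ => symm) hx hy
  filter_upwards [nhdsWithin_le_nhds (closedBall_mem_nhds a hδ)] with b hb
  exact .single (by rwa [dist_comm, ← mem_closedBall])

lemma exists_pseudoOrbit_refl_of_reflTransGen {δ : ℝ} (hδ : 0 ≤ δ) {p q : X}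
    (h : ReflTransGen (fun a b => dist a b ≤ δ) p q) :
    ∃ ξ : ℤ → X, IsPseudoOrbit (Homeomorph.refl X) δ ξ ∧ ξ 0 = p ∧ ∃ n : ℕ, ξ n = q := by
  induction h with
  | refl => exact ⟨fun _ => p, fun _ => by simpa using hδ, rfl, 0, rfl⟩
  | @tail b c _ hbc ih =>
    obtain ⟨ξ, hξ, hξ0, n, hξn⟩ := ih
    refine ⟨fun m => if m ≤ n then ξ m else c, fun m => ?_, by simpa using hξ0, n + 1, by simp⟩
    change dist (ite _ _ _) (ite _ _ _) ≤ δ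
    rcases lt_trichotomy m n with hm | rfl | hm
    · simpa [hm.le, Int.add_one_le_iff.2 hm] using hξ m
    · simpa [hξn] using hbc
    · simpa [hm.not_ge, (hm.trans (lt_add_one m)).not_ge] using hδ

theorem stmt19_general (p : X)
    (h : ∃ q ∈ connectedComponent p, q ≠ p) :
    ¬ ShadowablePoint (Homeomorph.refl X) p := by
  obtain ⟨q, hq, hne⟩ := h
  have hpos : 0 < dist q p := dist_pos.2 hne
  intro hp
  obtain ⟨δ, hδ, hshadow⟩ := hp (dist q p / 3) (by positivity)
  obtain ⟨ξ, hξ, hξ0, n, hξn⟩ := exists_pseudoOrbit_refl_of_reflTransGen hδ.le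
    (isPreconnected_connectedComponent.reflTransGen_dist_le hδ mem_connectedComponent hq)
  obtain ⟨y, hy⟩ := hshadow ξ hξ hξ0
  have hyp := hy 0
  have hyq := hy n
  simp only [hpow_refl, Homeomorph.refl_apply, id_eq, hξ0, hξn] at hyp hyq
  linarith [dist_triangle_left q p y]

theorem stmt19 [CompactSpace X] (p : X)
    (h : ∃ q ∈ connectedComponent p, q ≠ p) :
    ¬ ShadowablePoint (Homeomorph.refl X) p :=
  stmt19_general p h
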